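/- Let R be a commutative clean ring and h ∈ R[t] a monic polynomial of degree n. If h has a gSP-factorization, then h has a gSP-factorization in which the complete orthogonal set of idempotents has at most n + 1 elements. -/

import Mathlib

/-- A complete orthogonal set of idempotents: finitely many idempotents, pairwise orthogonal,
summing to `1`. -/
def IsCompleteOrthogonalIdempotents {R : Type*} [CommRing R] {k : ℕ} (e : Fin k → R) : Prop :=
  (∀ i, IsIdempotentElem (e i)) ∧ (∀ i j, i ≠ j → e i * e j = 0) ∧ ∑ i, e i = 1

/-- An SP-factorization of a monic polynomial `h` is a factorization `h = h₀ * p₀` into monic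
polynomials with `h₀(0)` a unit and all coefficients of `p₀ - t^(deg p₀)` nilpotent. -/
def HasSPFactorization {R : Type*} [CommRing R] (h : Polynomial R) : Prop :=
  ∃ h₀ p₀ : Polynomial R, h₀.Monic ∧ p₀.Monic ∧ h = h₀ * p₀ ∧
    IsUnit (h₀.eval 0) ∧ ∀ i, IsNilpotent ((p₀ - Polynomial.X ^ p₀.natDegree).coeff i)

/-- A monic `h ∈ R[t]` has a gSP-factorization if there is a complete orthogonal set of
idempotents `e₁, …, e_k` such that the image of `h` in `(R/(1-eᵢ))[t]` has an SP-factorization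
for each `i`. -/
def HasGSPFactorization {R : Type*} [CommRing R] (h : Polynomial R) : Prop :=
  ∃ (k : ℕ) (e : Fin k → R), IsCompleteOrthogonalIdempotents e ∧
    ∀ i, HasSPFactorization (h.map (Ideal.Quotient.mk (Ideal.span {1 - e i})))

/-- A ring is *clean* if every element is the sum of an idempotent and a unit. -/
def IsCleanRing (R : Type*) [Ring R] : Prop :=
  ∀ a : R, ∃ e u : R, IsIdempotentElem e ∧ IsUnit u ∧ a = e + u

/-!
Group the idempotents of a gSP-factorization by the degree `d ≤ n` of the nilpotent factor `p₀`.
For an idempotent `e`, working modulo `1 - e` is the same as multiplying by `e`, so the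
factors over `R ⧸ (1 - e)` lift to `R`, and for orthogonal `eᵢ` with a common `d` the lifts
`αᵢ`, `X ^ d + γᵢ` glue to `∑ eᵢ αᵢ` and `X ^ d + ∑ eᵢ γᵢ`, an SP-factorization modulo
`1 - ∑ eᵢ`. This leaves one idempotent for each `d ∈ {0, …, n}`.
-/

open Polynomial

theorem isCompleteOrthogonalIdempotents_iff {R : Type*} [CommRing R] {k : ℕ} {e : Fin k → R} :
    IsCompleteOrthogonalIdempotents e ↔ CompleteOrthogonalIdempotents e :=
  ⟨fun ⟨hid, horth, hsum⟩ => ⟨⟨hid, fun _ _ hij => horth _ _ hij⟩, hsum⟩,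
    fun he => ⟨he.idem, fun _ _ hij => he.ortho hij, he.complete⟩⟩

theorem CompleteOrthogonalIdempotents.sum_fiberwise {R ι κ : Type*} [Semiring R] [Fintype ι]
    [Fintype κ] [DecidableEq κ] {e : ι → R} (he : CompleteOrthogonalIdempotents e)
    (δ : ι → κ) : CompleteOrthogonalIdempotents fun j => ∑ i with δ i = j, e i where
  idem _ := he.isIdempotentElem_sum
  ortho j j' hjj' := by
    refine Finset.sum_mul _ _ _ |>.trans <| Finset.sum_eq_zero fun i hi => ?_
    refine he.mul_sum_of_notMem fun hi' => hjj' ?_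
    rw [← (Finset.mem_filter.1 hi).2, (Finset.mem_filter.1 hi').2]
  complete := (Finset.sum_fiberwise Finset.univ δ e).trans he.complete

theorem Polynomial.Monic.degree_sub_X_pow_natDegree_lt {R : Type*} [Ring R] {p : R[X]}
    (hp : p.Monic) : (p - X ^ p.natDegree).degree < ↑p.natDegree := by
  rw [degree_lt_iff_coeff_zero]
  intro m hm
  rw [coeff_sub, coeff_X_pow]
  rcases hm.eq_or_lt with rfl | hlt
  · rw [if_pos rfl, hp.coeff_natDegree, sub_self]
  · rw [if_neg hlt.ne', coeff_eq_zero_of_natDegree_lt hlt, sub_zero]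

namespace IsIdempotentElem

variable {R : Type*} [CommRing R] {e : R}

theorem mk_span_one_sub_eq_iff (he : IsIdempotentElem e) {r s : R} :
    Ideal.Quotient.mk (Ideal.span {1 - e}) r = Ideal.Quotient.mk _ s ↔ e * r = e * s := by
  rw [Ideal.Quotient.eq, ← he.ker_toSpanSingleton_eq_span, LinearMap.mem_ker,
    LinearMap.toSpanSingleton_apply, smul_eq_mul, sub_mul, sub_eq_zero, mul_comm r, mul_comm s]

theorem map_mk_span_one_sub_eq_iff (he : IsIdempotentElem e) {p q : R[X]} :
    p.map (Ideal.Quotient.mk (Ideal.span {1 - e})) = q.map (Ideal.Quotient.mk _) ↔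
      C e * p = C e * q := by
  simp only [Polynomial.ext_iff, coeff_map, coeff_C_mul, he.mk_span_one_sub_eq_iff]

theorem isNilpotent_mul_of_isNilpotent_mk (he : IsIdempotentElem e) {r : R}
    (hr : IsNilpotent (Ideal.Quotient.mk (Ideal.span {1 - e}) r)) : IsNilpotent (e * r) := by
  obtain ⟨m, hm⟩ := hr
  have hem : e * r ^ m = 0 := by
    rw [← mul_zero e, ← he.mk_span_one_sub_eq_iff, map_pow, hm, map_zero]
  exact ⟨m + 1, by rw [mul_pow, he.pow_succ_eq, pow_succ, ← mul_assoc, hem, zero_mul]⟩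

end IsIdempotentElem

section SPFactorizationAt

variable {R : Type*} [CommRing R]

/-- An SP-factorization of `h` in `(R ⧸ (1 - e))[X]` whose nilpotent factor has degree `d`,
written in `R` itself: for an idempotent `e`, reducing modulo `1 - e` amounts to multiplying
by `e`. -/
def HasSPFactorizationAt (e : R) (h : R[X]) (d : ℕ) : Prop :=
  ∃ α γ : R[X], γ.degree < d ∧ C e * h = C e * (α * (X ^ d + γ)) ∧
    (∃ u, e * (α.eval 0 * u) = e) ∧ ∀ j, IsNilpotent (e * γ.coeff j)

theorem HasSPFactorization.exists_hasSPFactorizationAt {e : R} (he : IsIdempotentElem e)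
    {h : R[X]} (hsp : HasSPFactorization (h.map (Ideal.Quotient.mk (Ideal.span {1 - e})))) :
    ∃ d ≤ h.natDegree, HasSPFactorizationAt e h d := by
  obtain ⟨h₀, p₀, hm₀, hp₀, hfac, hunit, hnil⟩ := hsp
  set π := Ideal.Quotient.mk (Ideal.span {1 - e})
  have hπ : Function.Surjective π := Ideal.Quotient.mk_surjective
  refine ⟨p₀.natDegree, ?_, ?_⟩
  · calc p₀.natDegree ≤ (h₀ * p₀).natDegree := by rw [hm₀.natDegree_mul hp₀]; omega
      _ = (h.map π).natDegree := by rw [hfac]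
      _ ≤ h.natDegree := natDegree_map_le
  obtain ⟨α, rfl⟩ := map_surjective π hπ h₀
  obtain ⟨γ, hγ, hγdeg⟩ := exists_degree_eq_of_mem_lifts (mem_lifts_of_surjective hπ
    (p₀ - X ^ p₀.natDegree))
  obtain ⟨v, hv⟩ := hunit.exists_right_inv
  obtain ⟨u, rfl⟩ := hπ v
  refine ⟨α, γ, hγdeg ▸ hp₀.degree_sub_X_pow_natDegree_lt, ?_, ⟨u, ?_⟩, fun j => ?_⟩
  · rw [← he.map_mk_span_one_sub_eq_iff, hfac, Polynomial.map_mul, Polynomial.map_add,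
      Polynomial.map_pow, map_X, hγ, add_sub_cancel]
  · have hαu : π (α.eval 0 * u) = π 1 := by rw [map_mul, ← eval_zero_map, hv, map_one]
    exact (he.mk_span_one_sub_eq_iff.1 hαu).trans (mul_one e)
  · refine he.isNilpotent_mul_of_isNilpotent_mk ?_
    rw [← coeff_map, hγ]
    exact hnil j

theorem HasSPFactorizationAt.hasSPFactorization {e : R} (he : IsIdempotentElem e) {h : R[X]}
    (hm : h.Monic) {d : ℕ} (hsp : HasSPFactorizationAt e h d) :
    HasSPFactorization (h.map (Ideal.Quotient.mk (Ideal.span {1 - e}))) := by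
  obtain ⟨α, γ, hγ, hfac, ⟨u, hu⟩, hnil⟩ := hsp
  set π := Ideal.Quotient.mk (Ideal.span {1 - e})
  have hp₀ : ((X ^ d + γ).map π).Monic := (monic_X_pow_add hγ).map π
  have hfac' : h.map π = α.map π * (X ^ d + γ).map π := by
    rw [← Polynomial.map_mul]
    exact he.map_mk_span_one_sub_eq_iff.2 hfac
  refine ⟨α.map π, _, hp₀.of_mul_monic_right (hfac' ▸ hm.map π), hp₀, hfac', ?_, fun j => ?_⟩
  · refine IsUnit.of_mul_eq_one (π u) ?_
    rw [eval_zero_map, ← map_mul, ← map_one π, he.mk_span_one_sub_eq_iff, mul_one, hu]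
  rcases subsingleton_or_nontrivial (R ⧸ Ideal.span {1 - e}) with _ | _
  · exact ⟨1, Subsingleton.elim _ _⟩
  have hdeg : ((X ^ d + γ).map π).natDegree = d := by
    rw [Polynomial.map_add, Polynomial.map_pow, map_X, natDegree_add_eq_left_of_degree_lt,
      natDegree_X_pow]
    exact degree_map_le.trans_lt (by rwa [degree_X_pow])
  rw [hdeg, Polynomial.map_add, Polynomial.map_pow, map_X, add_sub_cancel_left, coeff_map,
    show π (γ.coeff j) = π (e * γ.coeff j) from
      he.mk_span_one_sub_eq_iff.2 (by rw [← mul_assoc, he.eq])]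
  exact (hnil j).map π

theorem hasSPFactorizationAt_zero (h : R[X]) (d : ℕ) : HasSPFactorizationAt 0 h d :=
  ⟨0, 0, by simp, by simp, ⟨0, by simp⟩, fun _ => by simp⟩

theorem HasSPFactorizationAt.add {e f : R} (he : IsIdempotentElem e) (hf : IsIdempotentElem f)
    (hef : e * f = 0) {h : R[X]} {d : ℕ} (hsp₁ : HasSPFactorizationAt e h d)
    (hsp₂ : HasSPFactorizationAt f h d) : HasSPFactorizationAt (e + f) h d := by
  obtain ⟨α₁, γ₁, hγ₁, hfac₁, ⟨u₁, hu₁⟩, hnil₁⟩ := hsp₁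
  obtain ⟨α₂, γ₂, hγ₂, hfac₂, ⟨u₂, hu₂⟩, hnil₂⟩ := hsp₂
  have hE : C e * C e = C e := by rw [← C_mul, he.eq]
  have hF : C f * C f = C f := by rw [← C_mul, hf.eq]
  have hEF : C e * C f = 0 := by rw [← C_mul, hef, C_0]
  refine ⟨C e * α₁ + C f * α₂, C e * γ₁ + C f * γ₂, ?_, ?_, ⟨e * u₁ + f * u₂, ?_⟩, fun j => ?_⟩
  · refine (degree_add_le _ _).trans_lt (max_lt ?_ ?_)
    · exact (smul_eq_C_mul e ▸ degree_smul_le e γ₁).trans_lt hγ₁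
    · exact (smul_eq_C_mul f ▸ degree_smul_le f γ₂).trans_lt hγ₂
  · rw [C_add]
    set T := X ^ d + (C e * γ₁ + C f * γ₂)
    linear_combination hfac₁ + hfac₂ - (α₁ * T + α₁ * γ₁) * hE - (α₂ * T + α₂ * γ₂) * hF -
      ((α₁ + α₂) * T + α₁ * γ₂ + α₂ * γ₁) * hEF
  · simp only [eval_add, eval_mul, eval_C]
    set S := e * u₁ + f * u₂
    linear_combination hu₁ + hu₂ + (α₁.eval 0 * S + α₁.eval 0 * u₁) * he.eq +
      (α₂.eval 0 * S + α₂.eval 0 * u₂) * hf.eq +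
      ((α₁.eval 0 + α₂.eval 0) * S + α₁.eval 0 * u₂ + α₂.eval 0 * u₁) * hef
  · rw [coeff_add, coeff_C_mul, coeff_C_mul]
    have : (e + f) * (e * γ₁.coeff j + f * γ₂.coeff j) = e * γ₁.coeff j + f * γ₂.coeff j := by
      linear_combination γ₁.coeff j * he.eq + γ₂.coeff j * hf.eq +
        (γ₁.coeff j + γ₂.coeff j) * hef
    rw [this]
    exact (Commute.all _ _).isNilpotent_add (hnil₁ j) (hnil₂ j)

theorem HasSPFactorizationAt.sum {ι : Type*} {e : ι → R} (he : OrthogonalIdempotents e)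
    {h : R[X]} {d : ℕ} (s : Finset ι) (hsp : ∀ i ∈ s, HasSPFactorizationAt (e i) h d) :
    HasSPFactorizationAt (∑ i ∈ s, e i) h d := by
  classical
  induction s using Finset.induction_on with
  | empty => simpa using hasSPFactorizationAt_zero h d
  | insert i s hi ih =>
    rw [Finset.sum_insert hi]
    exact .add (he.idem i) he.isIdempotentElem_sum (he.mul_sum_of_notMem hi)
      (hsp i (Finset.mem_insert_self i s)) (ih fun j hj => hsp j (Finset.mem_insert_of_mem hj))

end SPFactorizationAt

theorem gSPFactorization_card_le_general {R : Type*} [CommRing R]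
    {n : ℕ} (h : Polynomial R) (hmonic : h.Monic) (hdeg : h.natDegree = n)
    (hg : HasGSPFactorization h) :
    ∃ m : ℕ, m ≤ n + 1 ∧ ∃ e : Fin m → R, IsCompleteOrthogonalIdempotents e ∧
      ∀ i, HasSPFactorization (h.map (Ideal.Quotient.mk (Ideal.span {1 - e i}))) := by
  obtain ⟨k, e, he, hsp⟩ := hg
  rw [isCompleteOrthogonalIdempotents_iff] at he
  have hδ_exists : ∀ i, ∃ d : Fin (n + 1), HasSPFactorizationAt (e i) h d := fun i => by
    obtain ⟨d, hd, hspd⟩ := (hsp i).exists_hasSPFactorizationAt (he.idem i)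
    exact ⟨⟨d, by omega⟩, hspd⟩
  choose δ hδ using hδ_exists
  refine ⟨n + 1, le_rfl, fun j => ∑ i with δ i = j, e i,
    isCompleteOrthogonalIdempotents_iff.2 (he.sum_fiberwise δ), fun j => ?_⟩
  have hglued : HasSPFactorizationAt (∑ i with δ i = j, e i) h j :=
    .sum he.toOrthogonalIdempotents _ fun i hi => (Finset.mem_filter.1 hi).2 ▸ hδ i
  exact hglued.hasSPFactorization he.isIdempotentElem_sum hmonic

/-- If a monic polynomial of degree `n` over a commutative clean ring has a
gSP-factorization, then it has one whose complete orthogonal set of idempotents has at most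
`n + 1` elements. -/
theorem gSPFactorization_card_le {R : Type*} [CommRing R] (hR : IsCleanRing R)
    {n : ℕ} (h : Polynomial R) (hmonic : h.Monic) (hdeg : h.natDegree = n)
    (hg : HasGSPFactorization h) :
    ∃ m : ℕ, m ≤ n + 1 ∧ ∃ e : Fin m → R, IsCompleteOrthogonalIdempotents e ∧
      ∀ i, HasSPFactorization (h.map (Ideal.Quotient.mk (Ideal.span {1 - e i}))) :=
  gSPFactorization_card_le_general h hmonic hdeg hg
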